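/- If G is a connected triangle-free graph of order n ≥ 2, then χ_{μ_i}(G) ≤ ⌈(n − μ_i(G))/2⌉ + 1. -/

import Mathlib

open SimpleGraph

variable {V W : Type*}

/-- Two vertices of `X` are `X`-visible if some geodesic between them has all
internal vertices outside `X`; `X` is a mutual-visibility set if this holds
for every reachable pair of vertices of `X`. -/
def IsMVSet (G : SimpleGraph V) (X : Set V) : Prop :=
  ∀ x ∈ X, ∀ y ∈ X, x ≠ y → G.Reachable x y →
    ∃ p : G.Walk x y, p.length = G.dist x y ∧
      ∀ z ∈ p.support, z ≠ x → z ≠ y → z ∉ X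

/-- An independent mutual-visibility set. -/
def IsIMVSet (G : SimpleGraph V) (X : Set V) : Prop :=
  (∀ x ∈ X, ∀ y ∈ X, ¬ G.Adj x y) ∧ IsMVSet G X

/-- The mutual-visibility chromatic number: the least `k` such that the vertex
set partitions into `k` mutual-visibility sets. -/
noncomputable def mvChrom (G : SimpleGraph V) : ℕ :=
  sInf {k | ∃ f : V → Fin k, ∀ i, IsMVSet G (f ⁻¹' {i})}

/-- The independent mutual-visibility chromatic number. -/
noncomputable def imvChrom (G : SimpleGraph V) : ℕ :=
  sInf {k | ∃ f : V → Fin k, ∀ i, IsIMVSet G (f ⁻¹' {i})}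

/-- The chromatic number, as a natural number. -/
noncomputable def chromNat (G : SimpleGraph V) : ℕ :=
  sInf {k | G.Colorable k}

/-- The independent mutual-visibility number `μᵢ(G)`. -/
noncomputable def imvNum (G : SimpleGraph V) : ℕ :=
  sSup {n | ∃ s : Finset V, IsIMVSet G ↑s ∧ s.card = n}

/-- The independence number `α(G)`. -/
noncomputable def indepNum (G : SimpleGraph V) : ℕ :=
  sSup {n | ∃ s : Finset V, (∀ x ∈ s, ∀ y ∈ s, ¬ G.Adj x y) ∧ s.card = n}

/-!
Let `X` be a maximum independent mutual-visibility set and `S = V \ X`, with `|S| = n - μᵢ(G)`.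
Two non-adjacent vertices always form an IMV set, and in a triangle-free graph so does every
neighbourhood `N(w)`: two neighbours of `w` are non-adjacent and see each other through `w`.
Peeling non-adjacent pairs off `S` (one exists while `|S| ≥ 3`) covers `S` by `⌈|S|/2⌉` IMV sets,
unless what is left is a single edge `ab`; next to two more vertices `p, q` that edge is
absorbed by a neighbourhood, and if `S` itself is the edge `ab`, then `N(a) ∪ N(b) = V` because
`X` is independent and `G` connected.
-/

section

variable {G : SimpleGraph V}

lemma not_adj_of_cliqueFree_three (htf : G.CliqueFree 3) {w x y : V}
    (hx : G.Adj w x) (hy : G.Adj w y) : ¬ G.Adj x y :=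
  fun h => isIndepSet_neighborSet_of_triangleFree _ htf w hx hy h.ne h

lemma exists_not_adj_of_cliqueFree_three (htf : G.CliqueFree 3) {S : Finset V}
    (hS : 3 ≤ S.card) : ∃ p ∈ S, ∃ q ∈ S, p ≠ q ∧ ¬ G.Adj p q := by
  by_contra! h
  obtain ⟨t, hts, ht⟩ := Finset.exists_subset_card_eq hS
  exact htf t ⟨fun x hx y hy hxy => h x (hts hx) y (hts hy) hxy, ht⟩

lemma dist_eq_two_of_adj_of_adj {x y w : V} (hne : x ≠ y) (hxy : ¬ G.Adj x y)
    (hxw : G.Adj x w) (hwy : G.Adj w y) : G.dist x y = 2 := by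
  change (G.edist x y).toNat = 2
  rw [ENat.toNat_eq_iff two_ne_zero]
  exact_mod_cast edist_eq_two_iff.mpr ⟨hne, hxy, w, hxw, hwy.symm⟩

lemma IsIMVSet.mono {X Y : Set V} (h : IsIMVSet G X) (hYX : Y ⊆ X) : IsIMVSet G Y := by
  refine ⟨fun x hx y hy => h.1 x (hYX hx) y (hYX hy), fun x hx y hy hxy hr => ?_⟩
  obtain ⟨p, hp, hint⟩ := h.2 x (hYX hx) y (hYX hy) hxy hr
  exact ⟨p, hp, fun z hz hzx hzy hzY => hint z hz hzx hzy (hYX hzY)⟩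

lemma isIMVSet_pair {x y : V} (h : ¬ G.Adj x y) : IsIMVSet G {x, y} := by
  refine ⟨?_, fun a ha b hb hab hr => ?_⟩
  · rintro a ha b hb
    rcases ha with rfl | rfl <;> rcases hb with rfl | rfl
    exacts [G.loopless.irrefl _, h, fun h' => h h'.symm, G.loopless.irrefl _]
  · obtain ⟨p, hp⟩ := hr.exists_walk_length_eq_dist
    refine ⟨p, hp, fun z _ hza hzb hz => ?_⟩
    simp only [Set.mem_insert_iff, Set.mem_singleton_iff] at ha hb hz
    grind

lemma isIMVSet_singleton (x : V) : IsIMVSet G {x} := by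
  simpa using isIMVSet_pair (G.loopless.irrefl x)

lemma isIMVSet_neighborSet (htf : G.CliqueFree 3) (w : V) :
    IsIMVSet G (G.neighborSet w) := by
  refine ⟨fun x hx y hy => not_adj_of_cliqueFree_three htf hx hy, fun x hx y hy hne _ => ?_⟩
  rw [mem_neighborSet] at hx hy
  have hd := dist_eq_two_of_adj_of_adj hne (not_adj_of_cliqueFree_three htf hx hy) hx.symm hy
  refine ⟨.cons hx.symm (.cons hy .nil), by rw [hd]; rfl, fun z hz hzx hzy hzw => ?_⟩
  simp only [Walk.support_cons, Walk.support_nil, List.mem_cons, List.not_mem_nil,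
    or_false] at hz
  rcases hz with rfl | rfl | rfl
  exacts [hzx rfl, G.loopless.irrefl z hzw, hzy rfl]

/-- Covers suffice in place of partitions: the classes of a partition refining a cover are
subsets of its members, and subsets of IMV sets are IMV. -/
def HasIMVCover (G : SimpleGraph V) (S : Set V) (k : ℕ) : Prop :=
  ∃ L : List (Set V), L.length ≤ k ∧ (∀ C ∈ L, IsIMVSet G C) ∧ ∀ v ∈ S, ∃ C ∈ L, v ∈ C

lemma HasIMVCover.mono {S T : Set V} {k l : ℕ} (h : HasIMVCover G T k) (hST : S ⊆ T)
    (hkl : k ≤ l) : HasIMVCover G S l :=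
  let ⟨L, hlen, hL, hcov⟩ := h
  ⟨L, hlen.trans hkl, hL, fun v hv => hcov v (hST hv)⟩

lemma HasIMVCover.union {S T : Set V} {k l : ℕ} (hS : HasIMVCover G S k)
    (hT : HasIMVCover G T l) : HasIMVCover G (S ∪ T) (k + l) := by
  obtain ⟨L, hlen, hL, hcov⟩ := hS
  obtain ⟨M, hlen', hM, hcov'⟩ := hT
  refine ⟨L ++ M, by simp only [List.length_append]; omega, ?_, ?_⟩
  · simp only [List.mem_append]
    rintro C (hC | hC)
    exacts [hL C hC, hM C hC]
  · rintro v (hv | hv)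
    · obtain ⟨C, hC, hvC⟩ := hcov v hv
      exact ⟨C, List.mem_append_left _ hC, hvC⟩
    · obtain ⟨C, hC, hvC⟩ := hcov' v hv
      exact ⟨C, List.mem_append_right _ hC, hvC⟩

lemma IsIMVSet.hasIMVCover {C : Set V} (h : IsIMVSet G C) : HasIMVCover G C 1 :=
  ⟨[C], le_rfl, by simpa using h, fun v hv => ⟨C, List.mem_singleton_self C, hv⟩⟩

lemma imvChrom_le_of_hasIMVCover {k : ℕ} (h : HasIMVCover G Set.univ k) : imvChrom G ≤ k := by
  obtain ⟨L, hlen, hL, hcov⟩ := h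
  have hidx : ∀ v, ∃ i : Fin L.length, v ∈ L.get i := fun v => by
    obtain ⟨C, hC, hv⟩ := hcov v trivial
    obtain ⟨i, rfl⟩ := List.get_of_mem hC
    exact ⟨i, hv⟩
  choose f hf using hidx
  refine le_trans (Nat.sInf_le ⟨f, fun i => (hL _ (L.get_mem i)).mono ?_⟩) hlen
  intro v hv
  rw [Set.mem_preimage, Set.mem_singleton_iff] at hv
  exact hv ▸ hf v

/-- Either each end of the edge can be paired with a non-neighbour among `p, q`, or
triangle-freeness puts `p`, `q` and one end into the neighbourhood of the other end. -/
lemma hasIMVCover_of_not_adj_of_adj (htf : G.CliqueFree 3) {p q a b : V}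
    (hpq : ¬ G.Adj p q) (hab : G.Adj a b) : HasIMVCover G {p, q, a, b} 2 := by
  by_cases h₁ : ¬ G.Adj p a ∧ ¬ G.Adj q b
  · refine ((isIMVSet_pair h₁.1).hasIMVCover.union (isIMVSet_pair h₁.2).hasIMVCover).mono
      ?_ le_rfl
    intro v; simp only [Set.mem_insert_iff, Set.mem_singleton_iff, Set.mem_union]; tauto
  by_cases h₂ : ¬ G.Adj p b ∧ ¬ G.Adj q a
  · refine ((isIMVSet_pair h₂.1).hasIMVCover.union (isIMVSet_pair h₂.2).hasIMVCover).mono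
      ?_ le_rfl
    intro v; simp only [Set.mem_insert_iff, Set.mem_singleton_iff, Set.mem_union]; tauto
  have hp : ¬ (G.Adj p a ∧ G.Adj p b) := fun h => not_adj_of_cliqueFree_three htf h.1 h.2 hab
  have hq : ¬ (G.Adj q a ∧ G.Adj q b) := fun h => not_adj_of_cliqueFree_three htf h.1 h.2 hab
  obtain ⟨c, d, hcd, hpc, hqc, hS⟩ : ∃ c d, G.Adj c d ∧ G.Adj p c ∧ G.Adj q c ∧
      ({p, q, a, b} : Set V) = {p, q, c, d} := by
    by_cases hpa : G.Adj p a
    · have hqa : G.Adj q a := by tauto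
      exact ⟨a, b, hab, hpa, hqa, rfl⟩
    · have hqb : G.Adj q b := by tauto
      have hpb : G.Adj p b := by tauto
      refine ⟨b, a, hab.symm, hpb, hqb, ?_⟩
      ext v; simp only [Set.mem_insert_iff, Set.mem_singleton_iff]; tauto
  rw [hS]
  refine ((isIMVSet_neighborSet htf c).hasIMVCover.union (isIMVSet_singleton c).hasIMVCover).mono
    ?_ le_rfl
  rintro v (rfl | rfl | rfl | rfl)
  exacts [Or.inl hpc.symm, Or.inl hqc.symm, Or.inr rfl, Or.inl hcd]

lemma hasIMVCover_of_cliqueFree [DecidableEq V] (htf : G.CliqueFree 3) (S : Finset V)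
    (hS : ¬ ∃ a b, G.Adj a b ∧ S = {a, b}) : HasIMVCover G S ((S.card + 1) / 2) := by
  induction S using Finset.strongInduction with
  | H S ih =>
  rcases le_or_gt S.card 2 with hle | hlt
  · interval_cases h : S.card
    · rw [Finset.card_eq_zero.mp h]
      exact ⟨[], le_rfl, by simp, by simp⟩
    · obtain ⟨x, rfl⟩ := Finset.card_eq_one.mp h
      simpa using (isIMVSet_singleton x).hasIMVCover
    · obtain ⟨x, y, -, rfl⟩ := Finset.card_eq_two.mp h
      have hxy : ¬ G.Adj x y := fun hadj => hS ⟨x, y, hadj, rfl⟩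
      simpa using (isIMVSet_pair hxy).hasIMVCover
  obtain ⟨p, hp, q, hq, hne, hpq⟩ := exists_not_adj_of_cliqueFree_three htf hlt
  have hpqS : {p, q} ⊆ S := by simp [Finset.insert_subset_iff, hp, hq]
  have hcard : (S \ {p, q}).card = S.card - 2 := by
    rw [Finset.card_sdiff_of_subset hpqS, Finset.card_pair hne]
  have hsplit : (S : Set V) ⊆ {p, q} ∪ ↑(S \ {p, q}) := by
    intro v hv
    by_cases hvpq : v = p ∨ v = q
    · simp [hvpq]
    · simp_all
  by_cases hedge : ∃ a b, G.Adj a b ∧ S \ {p, q} = {a, b}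
  · obtain ⟨a, b, hab, hrest⟩ := hedge
    have hcard4 : S.card = 4 := by
      rw [hrest, Finset.card_pair hab.ne] at hcard
      omega
    refine (hasIMVCover_of_not_adj_of_adj htf hpq hab).mono ?_ (by omega)
    intro v hv
    have := hsplit hv
    rw [hrest] at this
    simp only [Finset.coe_pair, Set.mem_union, Set.mem_insert_iff,
      Set.mem_singleton_iff] at this ⊢
    tauto
  · refine ((isIMVSet_pair hpq).hasIMVCover.union
      (ih _ (Finset.sdiff_ssubset hpqS (by simp)) hedge)).mono hsplit (by omega)

lemma univ_subset_neighborSet_union (hconn : G.Connected) {X : Set V}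
    (hX : ∀ x ∈ X, ∀ y ∈ X, ¬ G.Adj x y) {a b : V} (hab : G.Adj a b) (hXc : Xᶜ = {a, b}) :
    Set.univ ⊆ G.neighborSet a ∪ G.neighborSet b := by
  have hcompl : ∀ {v}, v ∉ X → v = a ∨ v = b := fun hv => by
    simpa [← Set.mem_compl_iff, hXc] using hv
  intro v _
  by_cases hvX : v ∈ X
  · have haX : a ∉ X := by simp [← Set.mem_compl_iff, hXc]
    obtain ⟨w, hvw⟩ := (hconn v a).nonempty_neighborSet_left (ne_of_mem_of_not_mem hvX haX)
    rcases hcompl (fun hwX => hX v hvX w hwX hvw) with rfl | rfl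
    exacts [Or.inl hvw.symm, Or.inr hvw.symm]
  · rcases hcompl hvX with rfl | rfl
    exacts [Or.inr hab.symm, Or.inl hab]

end

lemma exists_isIMVSet_card_eq_imvNum [Fintype V] (G : SimpleGraph V) :
    ∃ X : Finset V, IsIMVSet G X ∧ X.card = imvNum G := by
  refine Nat.sSup_mem (s := {n | ∃ X : Finset V, IsIMVSet G X ∧ X.card = n})
    ⟨0, ∅, ⟨by simp, by simp [IsMVSet]⟩, rfl⟩ ⟨Fintype.card V, ?_⟩
  rintro _ ⟨X, -, rfl⟩
  exact X.card_le_univ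

theorem stmt7_general [Fintype V] (G : SimpleGraph V) (hconn : G.Connected)
    (htf : G.CliqueFree 3) :
    imvChrom G ≤ (Fintype.card V - imvNum G + 1) / 2 + 1 := by
  classical
  obtain ⟨X, hX, hXcard⟩ := exists_isIMVSet_card_eq_imvNum G
  have hcard : Xᶜ.card = Fintype.card V - imvNum G := by rw [Finset.card_compl, hXcard]
  by_cases hedge : ∃ a b, G.Adj a b ∧ Xᶜ = {a, b}
  · obtain ⟨a, b, hab, hXc⟩ := hedge
    have hcard2 : Xᶜ.card = 2 := by rw [hXc, Finset.card_pair hab.ne]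
    have hcover : HasIMVCover G Set.univ 2 :=
      ((isIMVSet_neighborSet htf a).hasIMVCover.union
        (isIMVSet_neighborSet htf b).hasIMVCover).mono
        (univ_subset_neighborSet_union hconn hX.1 hab (by rw [← Finset.coe_compl, hXc]; simp))
        le_rfl
    exact (imvChrom_le_of_hasIMVCover hcover).trans (by omega)
  · have hcover := (hasIMVCover_of_cliqueFree htf Xᶜ hedge).union hX.hasIMVCover
    rw [Finset.coe_compl, Set.compl_union_self, hcard] at hcover
    exact imvChrom_le_of_hasIMVCover hcover

theorem stmt7 [Fintype V] (G : SimpleGraph V) (hconn : G.Connected)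
    (htf : G.CliqueFree 3) (hn : 2 ≤ Fintype.card V) :
    imvChrom G ≤ (Fintype.card V - imvNum G + 1) / 2 + 1 :=
  stmt7_general G hconn htf
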